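/- arXiv:2410.02137 — 3 statements merged into one kernel-verified Lean document; each statement's English description precedes it below -/
import Mathlib

section
/- Let ρ be an n×n density matrix with eigenvalues λ_1,…,λ_n and let U be an n×n unitary with unitary channel 𝒰(a) = U a U†. Then the multiset of eigenvalues of the pseudo-density matrix R = (1/2){ρ ⊗ 𝟙, 𝒥[𝒰]}, where 𝒥[𝒰] = Σ_{i,j} |i⟩⟨j| ⊗ U|j⟩⟨i|U†, equals the multiset {λ_1,…,λ_n} ∪ {±(λ_i+λ_j)/2 : 1 ≤ i < j ≤ n}. -/
open Kronecker Matrix ComplexOrder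

/-- Jamiołkowski matrix `𝒥[𝒩] = ∑ᵢⱼ |i⟩⟨j| ⊗ 𝒩(|j⟩⟨i|)` of a map `𝒩`. -/
noncomputable def jam {n m : Type*} [Fintype n] [DecidableEq n]
    (𝒩 : Matrix n n ℂ → Matrix m m ℂ) : Matrix (n × m) (n × m) ℂ :=
  ∑ i : n, ∑ j : n, Matrix.single i j (1 : ℂ) ⊗ₖ 𝒩 (Matrix.single j i 1)

/-- The pseudo-density matrix (spatiotemporal product)
`𝒩 ⋆ ρ = (1/2){ρ ⊗ 𝟙, 𝒥[𝒩]}`. -/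
noncomputable def pdm {n m : Type*} [Fintype n] [DecidableEq n] [Fintype m] [DecidableEq m]
    (𝒩 : Matrix n n ℂ → Matrix m m ℂ) (ρ : Matrix n n ℂ) : Matrix (n × m) (n × m) ℂ :=
  (1 / 2 : ℂ) • ((ρ ⊗ₖ (1 : Matrix m m ℂ)) * jam 𝒩 + jam 𝒩 * (ρ ⊗ₖ (1 : Matrix m m ℂ)))

/-!
In the basis `W ⊗ UW`, where `W` diagonalises `ρ = W (diag λ) Wᴴ`, the matrix `ρ ⊗ 𝟙` becomes
`diag λ ⊗ 𝟙` and `𝒥[𝒰]` becomes the swap `S` of the two tensor factors. So `R` is unitarily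
similar to `½{diag λ ⊗ 𝟙, S} = diag((λᵢ + λⱼ)/2) S`, which only couples `|ij⟩` with `|ji⟩`:
it fixes `|ii⟩` with eigenvalue `λᵢ`, and for `i < j` it has the eigenvectors `|ij⟩ ± |ji⟩`
with eigenvalues `±(λᵢ + λⱼ)/2`. The change of basis to these eigenvectors need not be unitary,
since only characteristic polynomials are compared.
-/

def swapMatrix (n R : Type*) [DecidableEq n] [Zero R] [One R] : Matrix (n × n) (n × n) R :=
  (Equiv.prodComm n n).toPEquiv.toMatrix

section Swap

variable {n R : Type*} [Fintype n] [DecidableEq n]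

section NonAssocSemiring

variable [NonAssocSemiring R]

lemma swapMatrix_mul (M : Matrix (n × n) (n × n) R) :
    swapMatrix n R * M = M.submatrix Prod.swap id :=
  PEquiv.toMatrix_toPEquiv_mul _ M

lemma mul_swapMatrix (M : Matrix (n × n) (n × n) R) :
    M * swapMatrix n R = M.submatrix id Prod.swap :=
  PEquiv.mul_toMatrix_toPEquiv M _

lemma swapMatrix_mul_swapMatrix : swapMatrix n R * swapMatrix n R = 1 := by
  rw [swapMatrix_mul]
  ext p q
  simp [swapMatrix, PEquiv.toMatrix_apply, one_apply]

lemma swapMatrix_mul_diagonal (d : n × n → R) :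
    swapMatrix n R * diagonal d = diagonal (d ∘ Prod.swap) * swapMatrix n R := by
  rw [swapMatrix_mul, mul_swapMatrix]
  ext p q
  simp [diagonal_apply, Prod.swap_eq_iff_eq_swap]

end NonAssocSemiring

lemma kronecker_mul_swapMatrix [CommSemiring R] (A B : Matrix n n R) :
    (A ⊗ₖ B) * swapMatrix n R = swapMatrix n R * (B ⊗ₖ A) := by
  rw [swapMatrix_mul, mul_swapMatrix]
  ext p q
  simp [mul_comm]

end Swap

section Channel

variable {n : Type*} [Fintype n] [DecidableEq n]

lemma jam_mul_mul (A B : Matrix n n ℂ) :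
    jam (fun X => A * X * B) = swapMatrix n ℂ * (A ⊗ₖ B) := by
  rw [swapMatrix_mul]
  ext p q
  simp [jam, Matrix.sum_apply, mul_apply, single_apply, ite_and, Finset.sum_ite_eq,
    Finset.sum_ite_eq']

lemma jam_id : jam (fun X : Matrix n n ℂ => X) = swapMatrix n ℂ := by
  simpa using jam_mul_mul (1 : Matrix n n ℂ) 1

lemma pdm_unitary_conj {W U : Matrix n n ℂ} (hW : W ∈ unitaryGroup n ℂ)
    (hU : U ∈ unitaryGroup n ℂ) (ρ : Matrix n n ℂ) :
    pdm (fun X => U * X * Uᴴ) (W * ρ * Wᴴ) =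
      (W ⊗ₖ (U * W)) * pdm (fun X => X) ρ * (W ⊗ₖ (U * W))ᴴ := by
  set V := W ⊗ₖ (U * W)
  have hW₁ : W * Wᴴ = 1 := mem_unitaryGroup_iff.mp hW
  have hUW : U * W ∈ unitaryGroup n ℂ := Submonoid.mul_mem _ hU hW
  have hUW₁ : U * W * (U * W)ᴴ = 1 := mem_unitaryGroup_iff.mp hUW
  have hVV : ∀ Y, Vᴴ * (V * Y) = Y := fun Y => by
    rw [← mul_assoc, ← star_eq_conjTranspose, (kronecker_mem_unitary hW hUW).1, one_mul]
  have hρ : (W * ρ * Wᴴ) ⊗ₖ (1 : Matrix n n ℂ) = V * (ρ ⊗ₖ 1) * Vᴴ := by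
    rw [conjTranspose_kronecker, ← mul_kronecker_mul, ← mul_kronecker_mul, mul_one, hUW₁]
  have hJ : jam (fun X => U * X * Uᴴ) = V * swapMatrix n ℂ * Vᴴ := by
    rw [jam_mul_mul, kronecker_mul_swapMatrix, mul_assoc, conjTranspose_kronecker,
      ← mul_kronecker_mul, mul_assoc, hW₁, mul_one, conjTranspose_mul, ← mul_assoc, hW₁, one_mul]
  rw [pdm, pdm, hρ, hJ, jam_id]
  simp only [Matrix.mul_smul, Matrix.smul_mul, mul_add, add_mul, mul_assoc, hVV]

lemma pdm_id_diagonal (d : n → ℂ) :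
    pdm (fun X => X) (diagonal d) =
      diagonal (fun q => (d q.1 + d q.2) / 2) * swapMatrix n ℂ := by
  have hd : diagonal d ⊗ₖ (1 : Matrix n n ℂ) = diagonal (fun q => d q.1) := by
    rw [← diagonal_one, diagonal_kronecker_diagonal]
    simp
  rw [pdm, jam_id, hd, swapMatrix_mul_diagonal, ← add_mul, diagonal_add, ← smul_mul,
    ← diagonal_smul]
  congr 2
  ext q
  simp only [Function.comp_apply, Prod.fst_swap, Pi.smul_apply, smul_eq_mul]
  ring

end Channel

section Symmetrizer

variable {n : Type*} [LinearOrder n]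

def pairSign (q : n × n) : ℂ := if q.1 < q.2 then 1 else if q.2 < q.1 then -1 else 0

lemma pairSign_swap (q : n × n) : pairSign q.swap = -pairSign q := by
  rcases lt_trichotomy q.1 q.2 with h | h | h <;> simp [pairSign, h, not_lt_of_gt]

lemma pairSign_pow_three (q : n × n) : pairSign q ^ 3 = pairSign q := by
  rcases lt_trichotomy q.1 q.2 with h | h | h <;> norm_num [pairSign, h, not_lt_of_gt]

variable [Fintype n]

/-- The `(i, j)` column is `|ij⟩ + |ji⟩` for `i < j`, `|ij⟩ - |ji⟩` for `i > j` and `|ii⟩` for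
`i = j`: an eigenvector of `diagonal μ * swapMatrix n ℂ` whenever `μ` is symmetric. -/
def symmetrizer : Matrix (n × n) (n × n) ℂ := 1 + swapMatrix n ℂ * diagonal pairSign

noncomputable def symmetrizerInv : Matrix (n × n) (n × n) ℂ :=
  1 - (1 / 2 : ℂ) • (diagonal (pairSign ^ 2) + swapMatrix n ℂ * diagonal pairSign)

lemma symmetrizer_apply (p q : n × n) :
    symmetrizer p q = (if p = q then 1 else 0) + if p = q.swap then pairSign q else 0 := by
  by_cases h : p = q.swap <;>
    simp [symmetrizer, swapMatrix_mul, one_apply, Prod.swap_eq_iff_eq_swap, h]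

lemma symmetrizer_mul_symmetrizerInv :
    (symmetrizer : Matrix (n × n) (n × n) ℂ) * symmetrizerInv = 1 := by
  set A := swapMatrix n ℂ * diagonal (pairSign (n := n))
  have hAA : A * A = -diagonal (pairSign ^ 2) := by
    have h := swapMatrix_mul_diagonal (R := ℂ) (pairSign (n := n) ∘ Prod.swap)
    rw [Function.comp_assoc, Prod.swap_swap_eq, Function.comp_id] at h
    rw [mul_assoc, ← mul_assoc (diagonal _), ← h, ← mul_assoc, ← mul_assoc,
      swapMatrix_mul_swapMatrix, one_mul, diagonal_mul_diagonal, diagonal_neg]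
    congr 1
    ext q
    simp [pairSign_swap, sq]
  have hAE : A * diagonal (pairSign ^ 2) = A := by
    rw [mul_assoc, diagonal_mul_diagonal]
    congr 2
    ext q
    rw [Pi.pow_apply, ← pow_succ', pairSign_pow_three]
  have hPEA : symmetrizer * (diagonal (pairSign ^ 2) + A) = A + A := by
    rw [symmetrizer, add_mul, one_mul, mul_add, hAE, hAA]
    abel
  rw [symmetrizerInv, mul_sub, mul_one, mul_smul_comm, hPEA, symmetrizer, ← two_smul ℂ A,
    smul_smul, one_div, inv_mul_cancel₀ two_ne_zero, one_smul, add_sub_cancel_right]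

lemma symmetrizerInv_mul_symmetrizer :
    (symmetrizerInv : Matrix (n × n) (n × n) ℂ) * symmetrizer = 1 :=
  mul_eq_one_comm.mp symmetrizer_mul_symmetrizerInv

lemma diagonal_mul_swapMatrix_mul_symmetrizer (μ : n × n → ℂ) (hμ : ∀ q, μ q.swap = μ q) :
    diagonal μ * swapMatrix n ℂ * symmetrizer =
      symmetrizer * diagonal (fun q => if q.2 < q.1 then -μ q else μ q) := by
  rw [mul_assoc, swapMatrix_mul]
  ext p q
  simp only [diagonal_mul, mul_diagonal, submatrix_apply, id, symmetrizer_apply,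
    Prod.swap_eq_iff_eq_swap]
  obtain ⟨k, l⟩ := p
  obtain ⟨i, j⟩ := q
  simp only [Prod.swap_prod_mk, Prod.mk.injEq]
  rcases lt_trichotomy i j with h | h | h <;> by_cases hk : k = i <;> by_cases hl : l = j <;>
    split_ifs <;> simp_all [pairSign, not_lt_of_gt, ne_of_lt, ne_of_gt]

end Symmetrizer

section Spectrum

variable {n : Type*} [Fintype n] [LinearOrder n]

noncomputable def pdmEigenvalue (d : n → ℝ) (q : n × n) : ℝ :=
  if q.2 < q.1 then -((d q.1 + d q.2) / 2) else (d q.1 + d q.2) / 2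

lemma exists_pdm_unitary_eq_conj_diagonal {W U : Matrix n n ℂ} (hW : W ∈ unitaryGroup n ℂ)
    (hU : U ∈ unitaryGroup n ℂ) (d : n → ℝ) :
    ∃ T T' : Matrix (n × n) (n × n) ℂ, T' * T = 1 ∧
      pdm (fun X => U * X * Uᴴ) (W * diagonal (Complex.ofReal ∘ d) * Wᴴ) =
        T * diagonal (fun q => (pdmEigenvalue d q : ℂ)) * T' := by
  set V := W ⊗ₖ (U * W)
  have hV : Vᴴ * V = 1 := mem_unitaryGroup_iff'.mp <|
    kronecker_mem_unitary hW (Submonoid.mul_mem _ hU hW)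
  have hM : diagonal (fun q => ((Complex.ofReal ∘ d) q.1 + (Complex.ofReal ∘ d) q.2) / 2) *
      swapMatrix n ℂ = symmetrizer * diagonal (fun q => (pdmEigenvalue d q : ℂ)) * symmetrizerInv := by
    rw [← mul_one (diagonal _ * _), ← symmetrizer_mul_symmetrizerInv, ← mul_assoc,
      diagonal_mul_swapMatrix_mul_symmetrizer _ fun _ => by
        simp only [Prod.fst_swap, Prod.snd_swap, add_comm]]
    congr 3
    ext q
    simp only [pdmEigenvalue, Function.comp_apply]
    split_ifs <;> push_cast <;> rfl
  refine ⟨V * symmetrizer, symmetrizerInv * Vᴴ, ?_, ?_⟩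
  · rw [mul_assoc, ← mul_assoc Vᴴ, hV, one_mul, symmetrizerInv_mul_symmetrizer]
  · rw [pdm_unitary_conj hW hU, pdm_id_diagonal, hM]
    simp only [mul_assoc]
    rfl

lemma Finset.univ_val_map_prod_eq_diag_add_lt_add_gt {α : Type*} (g : n × n → α) :
    univ.val.map g = univ.val.map (fun i => g (i, i))
      + (univ.filter fun q : n × n => q.1 < q.2).val.map g
      + (univ.filter fun q : n × n => q.1 < q.2).val.map (fun q => g q.swap) := by
  set u := univ.filter fun q : n × n => q.1 < q.2
  have hu : Disjoint u (u.map (Equiv.prodComm n n).toEmbedding) := by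
    simpa [u, Finset.disjoint_left] using fun _ _ => le_of_lt
  have hd : Disjoint univ.diag (u.disjUnion _ hu) := by
    simp [u, Finset.disjoint_left, Finset.mem_diag]
  have huniv : (univ : Finset (n × n)) = univ.diag.disjUnion _ hd := by
    ext ⟨i, j⟩
    simp [u, Finset.mem_diag, em]
  rw [huniv, Finset.disjUnion_val, Finset.disjUnion_val, Finset.diag, Finset.map_val,
    Finset.map_val, Multiset.map_add, Multiset.map_add, Multiset.map_map, Multiset.map_map,
    add_assoc]
  rfl

lemma univ_val_map_pdmEigenvalue (d : n → ℝ) :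
    Finset.univ.val.map (pdmEigenvalue d) = Finset.univ.val.map d
      + (Finset.univ.filter fun q : n × n => q.1 < q.2).val.map (fun q => (d q.1 + d q.2) / 2)
      + (Finset.univ.filter fun q : n × n => q.1 < q.2).val.map
          (fun q => -((d q.1 + d q.2) / 2)) := by
  rw [Finset.univ_val_map_prod_eq_diag_add_lt_add_gt]
  congr 1
  · congr 1
    · exact Multiset.map_congr rfl fun i _ => by simp [pdmEigenvalue]
    · exact Multiset.map_congr rfl fun q hq => by
        simp [pdmEigenvalue, not_lt_of_gt (Finset.mem_filter.mp hq).2]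
  · exact Multiset.map_congr rfl fun q hq => by
      simp [pdmEigenvalue, (Finset.mem_filter.mp hq).2, add_comm]

end Spectrum

lemma Matrix.IsHermitian.map_eigenvalues_eq_of_eq_conj_diagonal {𝕜 n : Type*} [RCLike 𝕜]
    [Fintype n] [DecidableEq n] {A T T' : Matrix n n 𝕜} (hA : A.IsHermitian) (hT : T' * T = 1)
    (d : n → ℝ) (h : A = T * diagonal (fun i => (d i : 𝕜)) * T') :
    Finset.univ.val.map hA.eigenvalues = Finset.univ.val.map d := by
  apply Multiset.map_injective (RCLike.ofReal_injective (K := 𝕜))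
  rw [Multiset.map_map, ← hA.roots_charpoly_eq_eigenvalues, h, charpoly_mul_comm, ← mul_assoc,
    hT, one_mul, charpoly_diagonal,
    Polynomial.roots_prod _ _ (by simp [Finset.prod_ne_zero_iff, Polynomial.X_sub_C_ne_zero])]
  simp

theorem pdm_unitary_spectrum_general {N : ℕ} (ρ U : Matrix (Fin N) (Fin N) ℂ)
    (hρ : ρ.IsHermitian)
    (hU : U * Uᴴ = 1)
    (hR : (pdm (fun X => U * X * Uᴴ) ρ).IsHermitian) :
    Multiset.map hR.eigenvalues Finset.univ.val =
      Multiset.map hρ.eigenvalues Finset.univ.val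
      + Multiset.map (fun q : Fin N × Fin N => (hρ.eigenvalues q.1 + hρ.eigenvalues q.2) / 2)
          (Finset.univ.filter fun q : Fin N × Fin N => q.1 < q.2).val
      + Multiset.map (fun q : Fin N × Fin N => -((hρ.eigenvalues q.1 + hρ.eigenvalues q.2) / 2))
          (Finset.univ.filter fun q : Fin N × Fin N => q.1 < q.2).val := by
  obtain ⟨T, T', hT, hRT⟩ := exists_pdm_unitary_eq_conj_diagonal hρ.eigenvectorUnitary.2
    (mem_unitaryGroup_iff.mpr hU) hρ.eigenvalues
  have hρW : ρ = hρ.eigenvectorUnitary * diagonal (Complex.ofReal ∘ hρ.eigenvalues) *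
      (hρ.eigenvectorUnitary : Matrix (Fin N) (Fin N) ℂ)ᴴ := hρ.spectral_theorem
  rw [← hρW] at hRT
  rw [hR.map_eigenvalues_eq_of_eq_conj_diagonal hT (pdmEigenvalue hρ.eigenvalues) hRT, univ_val_map_pdmEigenvalue]

/-- The multiset of eigenvalues of the PDM `(1/2){ρ⊗𝟙, 𝒥[𝒰]}` of a density matrix `ρ`
evolving under a unitary channel `𝒰` is `{λ₁,…,λₙ} ∪ {±(λᵢ+λⱼ)/2 : i < j}`. -/
theorem pdm_unitary_spectrum {N : ℕ} (ρ U : Matrix (Fin N) (Fin N) ℂ)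
    (hρ : ρ.IsHermitian) (hρpos : ρ.PosSemidef) (hρtr : ρ.trace = 1)
    (hU : U * Uᴴ = 1) (hU' : Uᴴ * U = 1)
    (hR : (pdm (fun X => U * X * Uᴴ) ρ).IsHermitian) :
    Multiset.map hR.eigenvalues Finset.univ.val =
      Multiset.map hρ.eigenvalues Finset.univ.val
      + Multiset.map (fun q : Fin N × Fin N => (hρ.eigenvalues q.1 + hρ.eigenvalues q.2) / 2)
          (Finset.univ.filter fun q : Fin N × Fin N => q.1 < q.2).val
      + Multiset.map (fun q : Fin N × Fin N => -((hρ.eigenvalues q.1 + hρ.eigenvalues q.2) / 2))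
          (Finset.univ.filter fun q : Fin N × Fin N => q.1 < q.2).val :=
  pdm_unitary_spectrum_general ρ U hρ hU hR
end

section
/- Let 𝒩_d be a Pauli channel 𝒩_d(ρ) = Σ_{i=0}^3 p_i σ_i ρ σ_i with probability vector (p_0,p_1,p_2,p_3), and let R_AB = (1/2)𝒥[𝒩_d] be the PDM with maximally mixed initial state. Then the eigenvalues of R_AB are (1/2 − p_0, 1/2 − p_1, 1/2 − p_2, 1/2 − p_3). -/
/-! The Jamiołkowski matrix of `X ↦ σ X σ` is `SWAP · (σ ⊗ σ)`, with entries `σ b c * σ a d`.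
The unnormalised Bell vectors `βₖ = (σₖ ⊗ 1)(|01⟩ - |10⟩)` are common eigenvectors of these four
matrices: `SWAP · (σⱼ ⊗ σⱼ)` acts on `βₖ` as `-1` if `j = k` and as `+1` otherwise. Hence
`R βₖ = ((∑ pⱼ) / 2 - pₖ) βₖ`, and since the `βₖ` form a basis, these are the eigenvalues of the
Hermitian matrix `R`: a diagonalisation `R V = V D` forces `R` and `D` to have the same
characteristic polynomial. -/

open Kronecker Matrix ComplexOrder

/-- Hermitian extension of the von Neumann entropy (base-2):
`S(X) = -Tr[X log₂|X|] = -∑ λᵢ log₂|λᵢ|` in terms of the eigenvalues of `X`. -/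
noncomputable def hermEntropy {n : Type*} [Fintype n] [DecidableEq n]
    {X : Matrix n n ℂ} (hX : X.IsHermitian) : ℝ :=
  -∑ i, hX.eigenvalues i * Real.logb 2 |hX.eigenvalues i|

/-- The Pauli matrices `σ₀ = I, σ₁ = σx, σ₂ = σy, σ₃ = σz`. -/
def pauli : Fin 4 → Matrix (Fin 2) (Fin 2) ℂ :=
  ![1, !![0, 1; 1, 0], !![0, -Complex.I; Complex.I, 0], !![1, 0; 0, -1]]

open Polynomial in
theorem Matrix.IsHermitian.map_eigenvalues_eq_of_mul_eq_mul_diagonal {𝕜 n : Type*} [RCLike 𝕜]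
    [Fintype n] [DecidableEq n] {A V : Matrix n n 𝕜} (hA : A.IsHermitian) (hV : IsUnit V)
    {d : n → ℝ} (hAV : A * V = V * diagonal (fun i => (d i : 𝕜))) :
    Multiset.map hA.eigenvalues Finset.univ.val = Multiset.map d Finset.univ.val := by
  obtain ⟨W, hWV⟩ := hV.exists_left_inv
  have hA_eq : A = V * (diagonal (fun i => (d i : 𝕜)) * W) := by
    rw [← mul_assoc, ← hAV, mul_assoc, mul_eq_one_comm.mp hWV, mul_one]
  have hchar : A.charpoly = (diagonal fun i => (d i : 𝕜)).charpoly := by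
    rw [hA_eq, charpoly_mul_comm, mul_assoc, hWV, mul_one]
  have hroots := congrArg roots hchar
  rw [hA.roots_charpoly_eq_eigenvalues, charpoly_diagonal,
    roots_prod _ _ (by simp [Finset.prod_ne_zero_iff, X_sub_C_ne_zero])] at hroots
  refine Multiset.map_injective (f := ((↑) : ℝ → 𝕜)) RCLike.ofReal_injective ?_
  simpa [Multiset.map_map] using hroots

theorem jam_sum_smul_mul_mul_apply {ι n m : Type*} [Fintype ι] [Fintype n] [DecidableEq n]
    (w : ι → ℂ) (K : ι → Matrix m n ℂ) (L : ι → Matrix n m ℂ) (a c : n) (b d : m) :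
    jam (fun X => ∑ i, w i • (K i * X * L i)) (a, b) (c, d) = ∑ i, w i * K i b c * L i a d := by
  simp [jam, Matrix.sum_apply, single_apply, ite_and, Matrix.mul_apply, mul_assoc]

/-- Column `k` is `(σ ⊗ 1)(|01⟩ - |10⟩)` for `σ = pauli (finProdFinEquiv k)`; its `|ab⟩`
coefficient is entry `(a, b)` of `σ * !![0, 1; -1, 0]`. -/
noncomputable def bellBasis : Matrix (Fin 2 × Fin 2) (Fin 2 × Fin 2) ℂ :=
  of fun (a, b) k => (pauli (finProdFinEquiv k) * !![0, 1; -1, 0] : Matrix (Fin 2) (Fin 2) ℂ) a b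

theorem bellBasis_conjTranspose_mul_self : bellBasisᴴ * bellBasis = (2 : ℂ) • 1 := by
  ext ⟨a, b⟩ ⟨c, d⟩
  fin_cases a <;> fin_cases b <;> fin_cases c <;> fin_cases d <;>
    simp [bellBasis, pauli, Matrix.mul_apply, Fintype.sum_prod_type, finProdFinEquiv,
      one_apply, one_add_one_eq_two]

theorem isUnit_bellBasis : IsUnit bellBasis :=
  .of_mul_eq_one_right ((1 / 2 : ℂ) • bellBasisᴴ) <| by
    rw [smul_mul_assoc, bellBasis_conjTranspose_mul_self, smul_smul]
    norm_num

theorem half_jam_pauliChannel_mul_bellBasis (p : Fin 4 → ℝ) :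
    (1 / 2 : ℂ) • jam (fun X => ∑ i, (p i : ℂ) • (pauli i * X * pauli i)) * bellBasis =
      bellBasis * diagonal fun k : Fin 2 × Fin 2 =>
        (((∑ i, p i) / 2 - p (finProdFinEquiv k) : ℝ) : ℂ) := by
  ext ⟨a, b⟩ ⟨c, d⟩
  simp only [Matrix.mul_apply, Fintype.sum_prod_type, Matrix.smul_apply,
    jam_sum_smul_mul_mul_apply]
  fin_cases a <;> fin_cases b <;> fin_cases c <;> fin_cases d <;>
    simp [bellBasis, pauli, Matrix.mul_apply, finProdFinEquiv, Fin.sum_univ_four] <;>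
    ring_nf <;> simp only [Complex.I_sq, Complex.I_pow_three] <;> ring

theorem pdm_pauli_channel_spectrum_general (p : Fin 4 → ℝ)
    (hp1 : ∑ i, p i = 1)
    (hR : ((1 / 2 : ℂ) •
        jam (fun X => ∑ i, (p i : ℂ) • (pauli i * X * pauli i))).IsHermitian) :
    Multiset.map hR.eigenvalues Finset.univ.val =
      {1 / 2 - p 0, 1 / 2 - p 1, 1 / 2 - p 2, 1 / 2 - p 3} := by
  rw [hR.map_eigenvalues_eq_of_mul_eq_mul_diagonal isUnit_bellBasis
    (half_jam_pauliChannel_mul_bellBasis p), hp1]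
  change Multiset.map ((fun k => 1 / 2 - p k) ∘ (finProdFinEquiv : Fin 2 × Fin 2 ≃ Fin 4)) _ = _
  rw [← Multiset.map_map, Multiset.map_univ_val_equiv, Fin.univ_val_map]
  rfl

/-- For a Pauli channel `𝒩_d(ρ) = ∑ pᵢ σᵢ ρ σᵢ` and maximally mixed initial state,
the PDM `R = (1/2)𝒥[𝒩_d]` has eigenvalues `(1/2 − p₀, 1/2 − p₁, 1/2 − p₂, 1/2 − p₃)`. -/
theorem pdm_pauli_channel_spectrum (p : Fin 4 → ℝ)
    (hp0 : ∀ i, 0 ≤ p i) (hp1 : ∑ i, p i = 1)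
    (hR : ((1 / 2 : ℂ) •
        jam (fun X => ∑ i, (p i : ℂ) • (pauli i * X * pauli i))).IsHermitian) :
    Multiset.map hR.eigenvalues Finset.univ.val =
      {1 / 2 - p 0, 1 / 2 - p 1, 1 / 2 - p 2, 1 / 2 - p 3} :=
  pdm_pauli_channel_spectrum_general p hp1 hR
end

section
/- Let (p_0,p_1,p_2,p_3) be a probability vector with p_0 > 1/2. Then the quantity S = -(1/2 − p_0)log₂(p_0 − 1/2) − Σ_{i=1}^3 (1/2 − p_i)log₂(1/2 − p_i) satisfies 1 ≤ S ≤ log₂ 3. -/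
set_option maxHeartbeats 800000

/-- Chord bound for a concave function: on `[x,y] ⊆ [0,∞)`, the graph lies above the chord. -/
lemma negMulLog_chord {x y z : ℝ} (hx : 0 ≤ x) (hxz : x ≤ z) (hzy : z ≤ y) (hxy : x < y) :
    (y - z) * Real.negMulLog x + (z - x) * Real.negMulLog y
      ≤ (y - x) * Real.negMulLog z := by
  have hg : ConcaveOn ℝ (Set.Ici 0) Real.negMulLog :=
    Real.strictConcaveOn_negMulLog.concaveOn
  have hy : 0 ≤ y := le_trans hx (hxz.trans hzy)
  have hz : 0 ≤ z := le_trans hx hxz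
  have hd : 0 < y - x := by linarith
  set t : ℝ := (y - z) / (y - x) with ht
  have ht0 : 0 ≤ t := div_nonneg (by linarith) hd.le
  have ht1 : 0 ≤ 1 - t := by
    have : t ≤ 1 := by rw [div_le_one hd]; linarith
    linarith
  have hcomb : t * x + (1 - t) * y = z := by
    have h0 : (y - x) * t = y - z := by rw [ht]; field_simp
    linear_combination -h0
  have key := hg.2 (Set.mem_Ici.2 hx) (Set.mem_Ici.2 hy) ht0 ht1 (by ring)
  simp only [smul_eq_mul, hcomb] at key
  have h1 : (y - x) * t = y - z := by rw [ht]; field_simp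
  have h2 : (y - x) * (1 - t) = z - x := by linear_combination -h1
  have hmul := mul_le_mul_of_nonneg_left key hd.le
  calc (y - z) * Real.negMulLog x + (z - x) * Real.negMulLog y
      = (y - x) * (t * Real.negMulLog x + (1 - t) * Real.negMulLog y) := by
        rw [← h1, ← h2]; ring
    _ ≤ (y - x) * Real.negMulLog z := hmul

/-- Three-point Jensen inequality for `negMulLog`. -/
lemma negMulLog_jensen3 {u v w : ℝ} (hu : 0 ≤ u) (hv : 0 ≤ v) (hw : 0 ≤ w) :
    Real.negMulLog u + Real.negMulLog v + Real.negMulLog w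
      ≤ 3 * Real.negMulLog ((u + v + w) / 3) := by
  have hg : ConcaveOn ℝ (Set.Ici 0) Real.negMulLog :=
    Real.strictConcaveOn_negMulLog.concaveOn
  have h1 := hg.2 (Set.mem_Ici.2 hu) (Set.mem_Ici.2 hv)
    (by norm_num : (0:ℝ) ≤ 1/2) (by norm_num : (0:ℝ) ≤ 1/2) (by norm_num)
  have hm : (0:ℝ) ≤ (u + v) / 2 := by linarith
  have h2 := hg.2 (Set.mem_Ici.2 hm) (Set.mem_Ici.2 hw)
    (by norm_num : (0:ℝ) ≤ 2/3) (by norm_num : (0:ℝ) ≤ 1/3) (by norm_num)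
  simp only [smul_eq_mul] at h1 h2
  have e1 : (1:ℝ)/2 * u + 1/2 * v = (u + v)/2 := by ring
  have e2 : (2:ℝ)/3 * ((u + v)/2) + 1/3 * w = (u + v + w)/3 := by ring
  rw [e1] at h1
  rw [e2] at h2
  linarith

/-- For a probability vector `(p₀,p₁,p₂,p₃)` with `p₀ > 1/2`, the quantity
`S = -(1/2 − p₀)log₂(p₀ − 1/2) − ∑_{i=1}^{3}(1/2 − pᵢ)log₂(1/2 − pᵢ)`
satisfies `1 ≤ S ≤ log₂ 3`. -/
theorem herm_entropy_dominant_bounds (p : Fin 4 → ℝ)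
    (hp0 : ∀ i, 0 ≤ p i) (hp1 : ∑ i, p i = 1) (hdom : 1 / 2 < p 0) :
    1 ≤ -(1 / 2 - p 0) * Real.logb 2 (p 0 - 1 / 2)
        - ((1 / 2 - p 1) * Real.logb 2 (1 / 2 - p 1)
          + (1 / 2 - p 2) * Real.logb 2 (1 / 2 - p 2)
          + (1 / 2 - p 3) * Real.logb 2 (1 / 2 - p 3)) ∧
      -(1 / 2 - p 0) * Real.logb 2 (p 0 - 1 / 2)
        - ((1 / 2 - p 1) * Real.logb 2 (1 / 2 - p 1)
          + (1 / 2 - p 2) * Real.logb 2 (1 / 2 - p 2)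
          + (1 / 2 - p 3) * Real.logb 2 (1 / 2 - p 3)) ≤ Real.logb 2 3 := by
  have hsum : p 0 + p 1 + p 2 + p 3 = 1 := by
    rw [Fin.sum_univ_four] at hp1; linarith
  set a : ℝ := p 0 - 1/2 with ha
  set q₁ : ℝ := 1/2 - p 1 with hq₁
  set q₂ : ℝ := 1/2 - p 2 with hq₂
  set q₃ : ℝ := 1/2 - p 3 with hq₃
  have hp0' := hp0 0
  have hp1' := hp0 1
  have hp2' := hp0 2
  have hp3' := hp0 3
  have ha0 : 0 < a := by simp [ha]; linarith
  have ha2 : a ≤ 1/2 := by simp [ha]; linarith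
  have hq1b : a ≤ q₁ ∧ q₁ ≤ 1/2 := ⟨by simp [ha, hq₁]; linarith, by simp [hq₁]; linarith⟩
  have hq2b : a ≤ q₂ ∧ q₂ ≤ 1/2 := ⟨by simp [ha, hq₂]; linarith, by simp [hq₂]; linarith⟩
  have hq3b : a ≤ q₃ ∧ q₃ ≤ 1/2 := ⟨by simp [ha, hq₃]; linarith, by simp [hq₃]; linarith⟩
  have hQ : q₁ + q₂ + q₃ = 1 + a := by simp [ha, hq₁, hq₂, hq₃]; linarith
  have hlog2 : (0:ℝ) < Real.log 2 := Real.log_pos (by norm_num)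
  clear_value a q₁ q₂ q₃
  -- Rewrite S via negMulLog
  have hS : -(1 / 2 - p 0) * Real.logb 2 a
        - (q₁ * Real.logb 2 q₁ + q₂ * Real.logb 2 q₂ + q₃ * Real.logb 2 q₃)
      = (Real.negMulLog q₁ + Real.negMulLog q₂ + Real.negMulLog q₃
          - Real.negMulLog a) / Real.log 2 := by
    simp only [Real.logb, Real.negMulLog, ha, hq₁, hq₂, hq₃]
    ring
  rw [hS]
  have ghalf : Real.negMulLog (1/2) = (1/2) * Real.log 2 := by
    rw [show (1:ℝ)/2 = (2:ℝ)⁻¹ by norm_num]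
    simp [Real.negMulLog, Real.log_inv]
  -- Lower bound: log 2 ≤ Σ g(qᵢ) - g(a)
  have hlow : Real.log 2 ≤ Real.negMulLog q₁ + Real.negMulLog q₂ + Real.negMulLog q₃
      - Real.negMulLog a := by
    rcases eq_or_lt_of_le ha2 with heq | hlt
    · -- a = 1/2 forces all qᵢ = 1/2
      have h1 : q₁ = 1/2 := le_antisymm hq1b.2 (heq ▸ hq1b.1)
      have h2 : q₂ = 1/2 := le_antisymm hq2b.2 (heq ▸ hq2b.1)
      have h3 : q₃ = 1/2 := le_antisymm hq3b.2 (heq ▸ hq3b.1)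
      rw [h1, h2, h3, heq, ghalf]; linarith
    · have c1 := negMulLog_chord ha0.le hq1b.1 hq1b.2 hlt
      have c2 := negMulLog_chord ha0.le hq2b.1 hq2b.2 hlt
      have c3 := negMulLog_chord ha0.le hq3b.1 hq3b.2 hlt
      rw [ghalf] at c1 c2 c3
      have hd : 0 < 1/2 - a := by linarith
      have eQ1 : (q₁ + q₂ + q₃) * Real.negMulLog a = (1 + a) * Real.negMulLog a := by
        rw [hQ]
      have eQ2 : (q₁ + q₂ + q₃) * Real.log 2 = (1 + a) * Real.log 2 := by rw [hQ]
      have hstep : (1/2 - a) * (Real.negMulLog a + Real.log 2)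
          ≤ (1/2 - a) * (Real.negMulLog q₁ + Real.negMulLog q₂ + Real.negMulLog q₃) := by
        nlinarith [c1, c2, c3, eQ1, eQ2]
      have := (mul_le_mul_iff_right₀ hd).mp hstep
      linarith
  -- Upper bound: Σ g(qᵢ) - g(a) ≤ log 3
  have hup : Real.negMulLog q₁ + Real.negMulLog q₂ + Real.negMulLog q₃
      - Real.negMulLog a ≤ Real.log 3 := by
    have hq10 : 0 ≤ q₁ := le_trans ha0.le hq1b.1
    have hq20 : 0 ≤ q₂ := le_trans ha0.le hq2b.1
    have hq30 : 0 ≤ q₃ := le_trans ha0.le hq3b.1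
    have hj := negMulLog_jensen3 hq10 hq20 hq30
    rw [hQ] at hj
    have h1a : (0:ℝ) < 1 + a := by linarith
    have hmean : Real.negMulLog ((1 + a)/3)
        = -((1 + a)/3) * (Real.log (1 + a) - Real.log 3) := by
      rw [Real.negMulLog, Real.log_div (by positivity) (by norm_num)]
    -- Need: 3 * g((1+a)/3) - g(a) ≤ log 3, i.e. a log(3a) ≤ (1+a) log(1+a)
    have key : a * Real.log (3 * a) ≤ (1 + a) * Real.log (1 + a) := by
      have l1 : Real.log (3 * a) ≤ Real.log (1 + a) :=
        Real.log_le_log (by positivity) (by linarith)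
      have l2 : 0 ≤ Real.log (1 + a) := Real.log_nonneg (by linarith)
      calc a * Real.log (3 * a) ≤ a * Real.log (1 + a) :=
            mul_le_mul_of_nonneg_left l1 ha0.le
        _ ≤ (1 + a) * Real.log (1 + a) := by nlinarith
      
    rw [Real.log_mul (by norm_num) (ne_of_gt ha0)] at key
    have hga : Real.negMulLog a = -(a * Real.log a) := by rw [Real.negMulLog]; ring
    rw [hmean] at hj
    rw [hga]
    nlinarith [hj, key, h1a]
  constructor
  · rw [le_div_iff₀ hlog2]; linarith
  · rw [Real.logb, div_le_div_iff₀ hlog2 hlog2]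
    nlinarith [hup, hlog2]
end
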